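/- arXiv:1807.08358 — 5 statements merged into one kernel-verified Lean document; each statement's English description precedes it below -/
import Mathlib

section
/- Let H be a finite group of order 2^n with nilpotency class c ≥ 1, and let N be a normal subgroup of H of order 2 such that the quotient H/N has nilpotency class c − 1 (so that H and H/N have the same coclass). If the automorphism group Aut(H/N) is a 2-group, then Aut(H) is a 2-group. -/
/-!
Since `H ⧸ N` has class `c - 1`, the term `γ_{c-1}(H)` of the lower central series lies in `N`,
and it is nontrivial because `H` has class `c`; as `|N| = 2`, this forces `N = γ_{c-1}(H)`.
So `N` is characteristic and every automorphism induces one of `H ⧸ N`. An automorphism `ψ` in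
the kernel of `Aut(H) → Aut(H ⧸ N)` fixes `N` pointwise (a group of order `2` has no nontrivial
automorphism), so writing `ψ x = x * m` with `m ∈ N` gives `ψ ^ k x = x * m ^ k`, whence
`ψ ^ 2 = 1`. Thus `Aut(H)` is an extension of a `2`-group by a `2`-group.
-/

namespace Subgroup

variable {G : Type*} [Group G]

theorem eq_of_le_of_ne_bot_of_prime_card {K N : Subgroup G} (hp : (Nat.card N).Prime)
    (hle : K ≤ N) (hK : K ≠ ⊥) : K = N := by
  have : Finite N := Nat.finite_of_card_ne_zero hp.ne_zero
  rcases (Nat.dvd_prime hp).mp (card_dvd_of_le hle) with h | h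
  · exact absurd (card_eq_one.mp h) hK
  · exact eq_of_le_of_card_ge hle h.ge

theorem lowerCentralSeries_le_of_nilpotencyClass_quotient_le (N : Subgroup G) [N.Normal]
    [Group.IsNilpotent (G ⧸ N)] {k : ℕ} (hk : Group.nilpotencyClass (G ⧸ N) ≤ k) :
    (⊤ : Subgroup G).lowerCentralSeries k ≤ N := by
  rw [← QuotientGroup.ker_mk' N, ← map_eq_bot_iff, map_lowerCentralSeries,
    map_top_of_surjective _ QuotientGroup.mk_surjective]
  exact lowerCentralSeries_eq_bot_iff_nilpotencyClass_le.mpr hk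

theorem lowerCentralSeries_pred_nilpotencyClass_eq [Group.IsNilpotent G] (N : Subgroup G)
    [N.Normal] (hp : (Nat.card N).Prime)
    (hlt : Group.nilpotencyClass (G ⧸ N) < Group.nilpotencyClass G) :
    (⊤ : Subgroup G).lowerCentralSeries (Group.nilpotencyClass G - 1) = N := by
  refine eq_of_le_of_ne_bot_of_prime_card hp
    (lowerCentralSeries_le_of_nilpotencyClass_quotient_le N (by omega)) fun h => ?_
  have := lowerCentralSeries_eq_bot_iff_nilpotencyClass_le.mp h
  omega

end Subgroup

theorem IsPGroup.of_ker {p : ℕ} {G K : Type*} [Group G] [Group K] (f : G →* K)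
    (hK : IsPGroup p K) (hker : IsPGroup p f.ker) : IsPGroup p G := by
  have := (hK.to_subgroup ⊤).comap_of_ker_isPGroup f hker
  rw [Subgroup.comap_top] at this
  exact this.of_equiv Subgroup.topEquiv

namespace MulAut

variable {G : Type*} [Group G]

def quotient (N : Subgroup G) [N.Normal] [N.Characteristic] : MulAut G →* MulAut (G ⧸ N) where
  toFun φ := QuotientGroup.congr N N φ (Subgroup.characteristic_iff_map_eq.mp ‹_› φ)
  map_one' := by
    ext x
    induction x using QuotientGroup.induction_on
    rfl
  map_mul' _ _ := by
    ext x
    induction x using QuotientGroup.induction_on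
    rfl

theorem mem_ker_quotient_iff (N : Subgroup G) [N.Normal] [N.Characteristic] (ψ : MulAut G) :
    ψ ∈ (quotient N).ker ↔ ∀ x, x⁻¹ * ψ x ∈ N := by
  simp only [MonoidHom.mem_ker, MulEquiv.ext_iff, QuotientGroup.forall_mk]
  exact forall_congr' fun x => eq_comm.trans QuotientGroup.eq

theorem eq_one_of_card_eq_two (h : Nat.card G = 2) (φ : MulAut G) : φ = 1 := by
  obtain ⟨y, -, huniq⟩ := (Nat.card_eq_two_iff' (1 : G)).mp h
  ext x
  by_cases hx : x = 1
  · simp [hx]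
  · exact (huniq _ ((map_ne_one_iff φ φ.injective).mpr hx)).trans (huniq x hx).symm

theorem apply_eq_self_of_card_eq_two {N : Subgroup G} [N.Characteristic] (hN : Nat.card N = 2)
    (φ : MulAut G) {x : G} (hx : x ∈ N) : φ x = x := by
  simpa [Subtype.ext_iff] using
    DFunLike.congr_fun (eq_one_of_card_eq_two hN (characteristic N φ)) ⟨x, hx⟩

theorem pow_apply_eq_mul_pow (ψ : MulAut G) {x : G} (hfix : ψ (x⁻¹ * ψ x) = x⁻¹ * ψ x) (k : ℕ) :
    (ψ ^ k) x = x * (x⁻¹ * ψ x) ^ k := by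
  induction k with
  | zero => simp
  | succ k ih =>
    rw [pow_succ', mul_apply, ih, map_mul, map_pow, hfix, pow_succ', ← mul_assoc,
      mul_inv_cancel_left]

theorem pow_card_eq_one {N : Subgroup G} (ψ : MulAut G) (hmem : ∀ x, x⁻¹ * ψ x ∈ N)
    (hfix : ∀ x ∈ N, ψ x = x) : ψ ^ Nat.card N = 1 := by
  ext x
  have hm : (x⁻¹ * ψ x) ^ Nat.card N = 1 := by
    exact congrArg Subtype.val (pow_card_eq_one' (G := N) (x := ⟨_, hmem x⟩))
  rw [pow_apply_eq_mul_pow ψ (hfix _ (hmem x)), hm, mul_one, one_apply]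

theorem isPGroup_ker_quotient_of_card_eq_two (N : Subgroup G) [N.Normal] [N.Characteristic]
    (hN : Nat.card N = 2) : IsPGroup 2 (quotient N).ker := by
  rintro ⟨ψ, hψ⟩
  refine ⟨1, Subtype.ext ?_⟩
  simpa [hN] using pow_card_eq_one ψ ((mem_ker_quotient_iff N ψ).mp hψ)
    fun _ => apply_eq_self_of_card_eq_two hN ψ

end MulAut

theorem aut_isPGroup_of_aut_quotient_isPGroup_general
    {H : Type*} [Group H] [Group.IsNilpotent H] {c : ℕ}
    (hc : 1 ≤ c)
    (hclass : Group.nilpotencyClass H = c)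
    (N : Subgroup H) [N.Normal] (hN : Nat.card N = 2)
    (hqclass : Group.nilpotencyClass (H ⧸ N) = c - 1)
    (hq : IsPGroup 2 (MulAut (H ⧸ N))) :
    IsPGroup 2 (MulAut H) := by
  have hγ : (⊤ : Subgroup H).lowerCentralSeries (c - 1) = N :=
    hclass ▸ Subgroup.lowerCentralSeries_pred_nilpotencyClass_eq N (hN ▸ Nat.prime_two) (by omega)
  have : N.Characteristic := hγ ▸ inferInstance
  exact hq.of_ker (MulAut.quotient N) (MulAut.isPGroup_ker_quotient_of_card_eq_two N hN)

/-- If `H` is a finite `2`-group of nilpotency class `c ≥ 1`, `N` is a normal subgroup of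
order `2` such that `H / N` has nilpotency class `c - 1` (so `H` and `H / N` have the same
coclass), and `Aut(H / N)` is a `2`-group, then `Aut(H)` is a `2`-group. -/
theorem aut_isPGroup_of_aut_quotient_isPGroup
    {H : Type*} [Group H] [Finite H] [Group.IsNilpotent H] {n c : ℕ}
    (hc : 1 ≤ c) (hcard : Nat.card H = 2 ^ n)
    (hclass : Group.nilpotencyClass H = c)
    (N : Subgroup H) [N.Normal] (hN : Nat.card N = 2)
    (hqclass : Group.nilpotencyClass (H ⧸ N) = c - 1)
    (hq : IsPGroup 2 (MulAut (H ⧸ N))) :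
    IsPGroup 2 (MulAut H) :=
  aut_isPGroup_of_aut_quotient_isPGroup_general hc hclass N hN hqclass hq
end

section
/- The automorphism group of Q8 × C2, the direct product of the quaternion group of order 8 with the cyclic group of order 2, is not a 2-group. -/
/-!
The automorphism of `Q₈` permuting `i, j, k` cyclically has order `3`; extended by the identity
on `C₂` it is an automorphism of `Q₈ × C₂` of order `3`, which cannot occur in a `2`-group.
-/

namespace IsPGroup

theorem dvd_of_orderOf_eq_prime {p q : ℕ} {G : Type*} [Group G] (hG : IsPGroup p G) {g : G}
    (hq : q.Prime) (hg : orderOf g = q) : q ∣ p := by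
  obtain ⟨k, hk⟩ := hG g
  exact hq.dvd_of_dvd_pow (hg ▸ orderOf_dvd_of_pow_eq_one hk)

end IsPGroup

namespace MulAut

variable (G H : Type*) [Group G] [Group H]

def prodCongrLeft : MulAut G →* MulAut (G × H) where
  toFun e := e.prodCongr (MulEquiv.refl H)
  map_one' := rfl
  map_mul' _ _ := rfl

theorem prodCongrLeft_injective : Function.Injective (prodCongrLeft G H) := by
  intro e f hef
  ext g
  exact congrArg Prod.fst (DFunLike.congr_fun hef (g, 1))

end MulAut

namespace QuaternionGroup

/-- With `i = a 1`, `j = xa 0`, `k = i * j = xa 3` and `-1 = a 2`, this is the cyclic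
permutation `i ↦ j ↦ k ↦ i`. -/
def cycleIJKFun : QuaternionGroup 2 → QuaternionGroup 2
  | a i => if i = 1 then xa 0 else if i = 3 then xa 2 else a i
  | xa i => if i = 0 then xa 3 else if i = 1 then a 3 else if i = 2 then xa 1 else a 1

def cycleIJK : MulAut (QuaternionGroup 2) where
  toFun := cycleIJKFun
  invFun := cycleIJKFun ∘ cycleIJKFun
  left_inv := by decide
  right_inv := by decide
  map_mul' := by decide

theorem cycleIJK_pow_three : cycleIJK ^ 3 = 1 := by
  ext x
  revert x
  decide

theorem cycleIJK_ne_one : cycleIJK ≠ 1 := fun h => by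
  have : cycleIJKFun (a 1) = a 1 := DFunLike.congr_fun h (a 1)
  exact absurd this (by decide)

theorem orderOf_cycleIJK : orderOf cycleIJK = 3 :=
  orderOf_eq_prime cycleIJK_pow_three cycleIJK_ne_one

end QuaternionGroup

/-- The automorphism group of `Q₈ × C₂`, the direct product of the quaternion group of
order `8` with the cyclic group of order `2`, is not a `2`-group. -/
theorem aut_quaternion_times_c2_not_pGroup :
    ¬ IsPGroup 2 (MulAut (QuaternionGroup 2 × Multiplicative (ZMod 2))) := by
  intro h
  have hQ : IsPGroup 2 (MulAut (QuaternionGroup 2)) :=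
    h.of_injective _ (MulAut.prodCongrLeft_injective _ _)
  have h32 : 3 ∣ 2 := hQ.dvd_of_orderOf_eq_prime Nat.prime_three QuaternionGroup.orderOf_cycleIJK
  omega
end

section
/- For every natural number n ≥ 2, the group K_n^1 (obtained from the common relations together with g1² = 1, g2² = g3·t, g5^{g4} = g5) has order 2^{n+6}, nilpotency class n + 3 (hence coclass 3), and its automorphism group Aut(K_n^1) is not a 2-group. -/
/-- Generators `g₁, g₂, g₃, g₄, g₅, t` for the coclass-`3` groups `Kₙⁱ`. -/
inductive KGen : Type
  | g1 | g2 | g3 | g4 | g5 | t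

namespace KGen

def a1 : FreeGroup KGen := FreeGroup.of KGen.g1
def a2 : FreeGroup KGen := FreeGroup.of KGen.g2
def a3 : FreeGroup KGen := FreeGroup.of KGen.g3
def a4 : FreeGroup KGen := FreeGroup.of KGen.g4
def a5 : FreeGroup KGen := FreeGroup.of KGen.g5
def tt : FreeGroup KGen := FreeGroup.of KGen.t

/-- Conjugation `x ^ y = y⁻¹ * x * y`. -/
def cnj (x y : FreeGroup KGen) : FreeGroup KGen := y⁻¹ * x * y

/-- The common relators: `g₂^g₁ = g₂g₃`, `g₃^g₁ = g₃t`, `g₃^g₂ = g₃`, `g₃² = t⁻¹`,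
`g₄^g₁ = g₄`, `g₄^g₂ = g₄`, `g₄^g₃ = g₄`, `g₄² = 1`, `g₅^g₁ = g₅`, `g₅^g₂ = g₅`,
`g₅^g₃ = g₅`, `g₅² = 1`, `t^g₁ = t⁻¹`, `t^g₂ = t`, `t^g₃ = t`, `t^g₄ = t`, `t^g₅ = t`,
`t^(2^(n+1)) = 1`. -/
def commonRels (n : ℕ) : Set (FreeGroup KGen) :=
  {cnj a2 a1 * (a2 * a3)⁻¹,
   cnj a3 a1 * (a3 * tt)⁻¹,
   cnj a3 a2 * a3⁻¹,
   a3 ^ 2 * tt,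
   cnj a4 a1 * a4⁻¹,
   cnj a4 a2 * a4⁻¹,
   cnj a4 a3 * a4⁻¹,
   a4 ^ 2,
   cnj a5 a1 * a5⁻¹,
   cnj a5 a2 * a5⁻¹,
   cnj a5 a3 * a5⁻¹,
   a5 ^ 2,
   cnj tt a1 * tt,
   cnj tt a2 * tt⁻¹,
   cnj tt a3 * tt⁻¹,
   cnj tt a4 * tt⁻¹,
   cnj tt a5 * tt⁻¹,
   tt ^ (2 ^ (n + 1))}

end KGen

open KGen

/-- `Kₙ¹`: common relators together with `g₁² = 1`, `g₂² = g₃t`, `g₅^g₄ = g₅`. -/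
abbrev K1 (n : ℕ) : Type :=
  PresentedGroup (commonRels n ∪
    {a1 ^ 2, a2 ^ 2 * (a3 * tt)⁻¹, cnj a5 a4 * a5⁻¹})

/-- `Kₙ²`: common relators together with `g₁² = 1`, `g₂² = g₃t^(1+2^n)`, `g₅^g₄ = g₅`. -/
abbrev K2 (n : ℕ) : Type :=
  PresentedGroup (commonRels n ∪
    {a1 ^ 2, a2 ^ 2 * (a3 * tt ^ (1 + 2 ^ n))⁻¹, cnj a5 a4 * a5⁻¹})

/-- `Kₙ³`: common relators together with `g₁² = t^(2^n)`, `g₂² = g₃t`, `g₅^g₄ = g₅`. -/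
abbrev K3 (n : ℕ) : Type :=
  PresentedGroup (commonRels n ∪
    {a1 ^ 2 * (tt ^ (2 ^ n))⁻¹, a2 ^ 2 * (a3 * tt)⁻¹, cnj a5 a4 * a5⁻¹})

/-- `Kₙ⁴`: common relators together with `g₁² = 1`, `g₂² = g₃t`, `g₅^g₄ = g₅t^(2^n)`. -/
abbrev K4 (n : ℕ) : Type :=
  PresentedGroup (commonRels n ∪
    {a1 ^ 2, a2 ^ 2 * (a3 * tt)⁻¹, cnj a5 a4 * (a5 * tt ^ (2 ^ n))⁻¹})

/-- `Kₙ⁵`: common relators together with `g₁² = 1`, `g₂² = g₃t^(1+2^n)`,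
`g₅^g₄ = g₅t^(2^n)`. -/
abbrev K5 (n : ℕ) : Type :=
  PresentedGroup (commonRels n ∪
    {a1 ^ 2, a2 ^ 2 * (a3 * tt ^ (1 + 2 ^ n))⁻¹, cnj a5 a4 * (a5 * tt ^ (2 ^ n))⁻¹})

/-- `Kₙ⁶`: common relators together with `g₁² = t^(2^n)`, `g₂² = g₃t`,
`g₅^g₄ = g₅t^(2^n)`. -/
abbrev K6 (n : ℕ) : Type :=
  PresentedGroup (commonRels n ∪
    {a1 ^ 2 * (tt ^ (2 ^ n))⁻¹, a2 ^ 2 * (a3 * tt)⁻¹, cnj a5 a4 * (a5 * tt ^ (2 ^ n))⁻¹})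

/-!
`K₁ⁿ` is the direct product of the dihedral group of order `2 ^ (n + 4)` and a Klein four-group:
the relations force `g₃ = g₂⁻²` and `t = g₂⁴`, so `g₂` is a rotation of order `2 ^ (n + 3)`
inverted by the reflection `g₁`, while `g₄, g₅` are commuting central involutions. The lower
central series of a dihedral group is `γₖ = ⟨r ^ 2 ^ k⟩`, which gives order and class, and the
automorphism permuting the three involutions of the Klein factor has order `3`.
-/

open Subgroup
open scoped commutatorElement

theorem commute_of_inv_mul_mul_eq {G : Type*} [Group G] {a b : G} (h : b⁻¹ * a * b = a) :
    Commute a b := by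
  rwa [mul_assoc, inv_mul_eq_iff_eq_mul] at h

theorem MulEquiv.lowerCentralSeries_eq_bot_iff {G H : Type*} [Group G] [Group H] (e : G ≃* H)
    (k : ℕ) :
    (⊤ : Subgroup G).lowerCentralSeries k = ⊥ ↔ (⊤ : Subgroup H).lowerCentralSeries k = ⊥ := by
  rw [← map_top_of_surjective e.toMonoidHom e.surjective, ← map_lowerCentralSeries,
    map_eq_bot_iff_of_injective _ e.injective]

theorem pow_val_add_of_pow_eq_one {G : Type*} [Group G] {m : ℕ} [NeZero m] {a : G}
    (ha : a ^ m = 1) (i j : ZMod m) : a ^ (i + j).val = a ^ i.val * a ^ j.val := by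
  rw [ZMod.val_add, ← pow_eq_pow_mod _ ha, pow_add]

theorem pow_val_sub_of_pow_eq_one {G : Type*} [Group G] {m : ℕ} [NeZero m] {a : G}
    (ha : a ^ m = 1) (i j : ZMod m) : a ^ (j - i).val = (a ^ i.val)⁻¹ * a ^ j.val := by
  rw [eq_inv_mul_iff_mul_eq, ← pow_val_add_of_pow_eq_one ha, add_sub_cancel]

def MulAut.prodRight (A : Type*) {B : Type*} [Group A] [Group B] :
    MulAut B →* MulAut (A × B) where
  toFun σ := MulEquiv.prodCongr (MulEquiv.refl A) σ
  map_one' := rfl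
  map_mul' _ _ := rfl

theorem MulAut.prodRight_injective (A : Type*) {B : Type*} [Group A] [Group B] :
    Function.Injective (MulAut.prodRight A (B := B)) := fun _ _ h =>
  MulEquiv.ext fun b => congrArg Prod.snd (DFunLike.congr_fun h (1, b))

theorem IsPGroup.of_mulAut_prod {p : ℕ} {A B : Type*} [Group A] [Group B]
    (h : IsPGroup p (MulAut (A × B))) : IsPGroup p (MulAut B) :=
  h.of_injective _ (MulAut.prodRight_injective A)

namespace DihedralGroup

section LowerCentralSeries

variable {m : ℕ}

theorem r_mul_mem_zpowers (c i : ZMod m) : r (c * i) ∈ zpowers (r c) :=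
  ⟨(i.cast : ℤ), by simp only [r_zpow, ZMod.intCast_zmod_cast]⟩

theorem commutator_top_top :
    ⁅(⊤ : Subgroup (DihedralGroup m)), ⊤⁆ = zpowers (r (2 : ZMod m)) := by
  refine le_antisymm (commutator_le.mpr ?_) ?_
  · rintro (i | i) - (j | j) -
    · convert r_mul_mem_zpowers (2 : ZMod m) 0 using 2
      simp only [commutatorElement_def, inv_r, r_mul_r, r.injEq]; ring
    · convert r_mul_mem_zpowers (2 : ZMod m) i using 2
      simp only [commutatorElement_def, inv_r, inv_sr, r_mul_sr, sr_mul_r, sr_mul_sr, r.injEq]; ring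
    · convert r_mul_mem_zpowers (2 : ZMod m) (-j) using 2
      simp only [commutatorElement_def, inv_r, inv_sr, r_mul_r, sr_mul_r, sr_mul_sr, r.injEq]; ring
    · convert r_mul_mem_zpowers (2 : ZMod m) (j - i) using 2
      simp only [commutatorElement_def, inv_sr, r_mul_sr, sr_mul_sr, r.injEq]; ring
  · rw [zpowers_le, show r (2 : ZMod m) = ⁅r (1 : ZMod m), sr (0 : ZMod m)⁆ by
      simp only [commutatorElement_def, inv_r, inv_sr, r_mul_sr, sr_mul_r, sr_mul_sr, r.injEq]
      ring]
    exact commutator_mem_commutator (mem_top _) (mem_top _)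

theorem commutator_zpowers_r_top (c : ZMod m) :
    ⁅zpowers (r c), (⊤ : Subgroup (DihedralGroup m))⁆ = zpowers (r (2 * c)) := by
  refine le_antisymm (commutator_le.mpr ?_) ?_
  · rintro - ⟨z, rfl⟩ (j | j) -
    · convert r_mul_mem_zpowers (2 * c) 0 using 2
      simp only [r_zpow, commutatorElement_def, inv_r, r_mul_r, r.injEq]; ring
    · convert r_mul_mem_zpowers (2 * c) z using 2
      simp only [r_zpow, commutatorElement_def, inv_r, inv_sr, r_mul_sr, sr_mul_r, sr_mul_sr,
        r.injEq]
      ring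
  · rw [zpowers_le, show r (2 * c) = ⁅r c, sr 0⁆ by
      simp only [commutatorElement_def, inv_r, inv_sr, r_mul_sr, sr_mul_r, sr_mul_sr, r.injEq]
      ring]
    exact commutator_mem_commutator (mem_zpowers _) (mem_top _)

theorem lowerCentralSeries_eq_zpowers {k : ℕ} (hk : 1 ≤ k) :
    (⊤ : Subgroup (DihedralGroup m)).lowerCentralSeries k = zpowers (r (2 ^ k)) := by
  induction k, hk using Nat.le_induction with
  | base =>
    rw [Subgroup.lowerCentralSeries_succ, Subgroup.lowerCentralSeries_zero, commutator_top_top,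
      pow_one]
  | succ k _ ih =>
    rw [Subgroup.lowerCentralSeries_succ, ih, commutator_zpowers_r_top, pow_succ']

theorem lowerCentralSeries_eq_bot_iff {k : ℕ} (hk : 1 ≤ k) :
    (⊤ : Subgroup (DihedralGroup m)).lowerCentralSeries k = ⊥ ↔ (2 : ZMod m) ^ k = 0 := by
  rw [lowerCentralSeries_eq_zpowers hk, zpowers_eq_bot, one_def, r.injEq]

theorem lowerCentralSeries_two_pow_eq_bot_iff {e k : ℕ} (hk : 1 ≤ k) :
    (⊤ : Subgroup (DihedralGroup (2 ^ e))).lowerCentralSeries k = ⊥ ↔ e ≤ k := by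
  rw [lowerCentralSeries_eq_bot_iff hk, ← Nat.cast_two (R := ZMod (2 ^ e)), ← Nat.cast_pow,
    ZMod.natCast_eq_zero_iff, Nat.pow_dvd_pow_iff_le_right one_lt_two]

end LowerCentralSeries

section Lift

variable {m : ℕ} [NeZero m] {H : Type*} [Group H] {a b : H}

def lift (a b : H) (ha : a ^ m = 1) (hb : b ^ 2 = 1) (hab : b⁻¹ * a * b = a⁻¹) :
    DihedralGroup m →* H where
  toFun
    | r i => a ^ i.val
    | sr i => b * a ^ i.val
  map_one' := by
    show a ^ (0 : ZMod m).val = 1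
    rw [ZMod.val_zero, pow_zero]
  map_mul' := by
    have hconj (k : ℕ) : b⁻¹ * a ^ k * b = (a ^ k)⁻¹ := by
      have h := conj_pow (a := b⁻¹) (b := a) (i := k)
      rwa [inv_inv, hab, inv_pow, eq_comm] at h
    rintro (i | i) (j | j)
    · exact pow_val_add_of_pow_eq_one ha i j
    · show b * a ^ (j - i).val = a ^ i.val * (b * a ^ j.val)
      rw [pow_val_sub_of_pow_eq_one ha, ← hconj]
      group
    · show b * a ^ (i + j).val = b * a ^ i.val * a ^ j.val
      rw [pow_val_add_of_pow_eq_one ha, mul_assoc]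
    · show a ^ (j - i).val = b * a ^ i.val * (b * a ^ j.val)
      rw [pow_val_sub_of_pow_eq_one ha, ← hconj]
      calc b⁻¹ * a ^ i.val * b * a ^ j.val
          = b⁻¹ * b ^ 2 * a ^ i.val * b * a ^ j.val := by rw [hb, mul_one]
        _ = b * a ^ i.val * (b * a ^ j.val) := by group

@[simp] theorem lift_r_one (ha : a ^ m = 1) (hb : b ^ 2 = 1) (hab : b⁻¹ * a * b = a⁻¹) :
    lift a b ha hb hab (r 1) = a := by
  show a ^ (1 : ZMod m).val = a
  rw [ZMod.val_one_eq_one_mod, ← pow_eq_pow_mod _ ha, pow_one]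

@[simp] theorem lift_sr_zero (ha : a ^ m = 1) (hb : b ^ 2 = 1) (hab : b⁻¹ * a * b = a⁻¹) :
    lift a b ha hb hab (sr 0) = b := by
  show b * a ^ (0 : ZMod m).val = b
  rw [ZMod.val_zero, pow_zero, mul_one]

theorem lift_commute {c : H} (hac : Commute a c) (hbc : Commute b c) (ha : a ^ m = 1)
    (hb : b ^ 2 = 1) (hab : b⁻¹ * a * b = a⁻¹) (x : DihedralGroup m) :
    Commute (lift a b ha hb hab x) c := by
  rcases x with i | i
  · exact hac.pow_left _
  · exact hbc.mul_left (hac.pow_left _)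

@[ext] theorem hom_ext {f g : DihedralGroup m →* H} (hr : f (r 1) = g (r 1))
    (hs : f (sr 0) = g (sr 0)) : f = g := by
  have hr_pow (i : ZMod m) : r i = r 1 ^ i.val := by rw [r_one_pow, ZMod.natCast_zmod_val]
  have hsr (i : ZMod m) : sr i = sr 0 * r i := by rw [sr_mul_r, zero_add]
  ext (i | i)
  · rw [hr_pow, map_pow, map_pow, hr]
  · rw [hsr, hr_pow, map_mul, map_mul, map_pow, map_pow, hr, hs]

end Lift

/-- `r 1 ↦ sr 0 ↦ sr 1 ↦ r 1` on the Klein four-group `DihedralGroup 2`. -/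
def cycleInvolutionsHom : DihedralGroup 2 →* DihedralGroup 2 :=
  lift (sr 0) (sr 1) (by decide) (by decide) (by decide)

def cycleInvolutions : MulAut (DihedralGroup 2) :=
  cycleInvolutionsHom.toMulEquiv (cycleInvolutionsHom.comp cycleInvolutionsHom)
    (by ext <;> decide) (by ext <;> decide)

theorem orderOf_cycleInvolutions : orderOf cycleInvolutions = 3 :=
  orderOf_eq_prime (by ext x; revert x; decide) fun h => by
    have := DFunLike.congr_fun h (r 1)
    revert this
    decide

theorem not_isPGroup_two_mulAut_two : ¬ IsPGroup 2 (MulAut (DihedralGroup 2)) := fun h => by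
  have := h.orderOf_coprime (by norm_num : Nat.Coprime 2 3) cycleInvolutions
  rw [orderOf_cycleInvolutions] at this
  norm_num at this

end DihedralGroup

open DihedralGroup

namespace K1

variable (n : ℕ)

/-- `DihedralGroup m` has order `2 * m`; `DihedralGroup 2` is the Klein four-group. -/
abbrev Model : Type := DihedralGroup (2 ^ (n + 3)) × DihedralGroup 2

def genImage : KGen → Model n
  | .g1 => (sr 0, 1)
  | .g2 => (r 1, 1)
  | .g3 => (r 1, 1) ^ (-2 : ℤ)
  | .g4 => (1, r 1)
  | .g5 => (1, sr 0)
  | .t => (r 1, 1) ^ 4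

theorem lift_genImage_eq_one :
    ∀ w ∈ commonRels n ∪ {a1 ^ 2, a2 ^ 2 * (a3 * tt)⁻¹, cnj a5 a4 * a5⁻¹},
      FreeGroup.lift (genImage n) w = 1 := by
  have h2 : (2 : ZMod (2 ^ (n + 3))) ^ (n + 3) = 0 := by
    exact_mod_cast ZMod.natCast_self (2 ^ (n + 3))
  intro w hw
  simp only [commonRels, Set.mem_union, Set.mem_insert_iff, Set.mem_singleton_iff] at hw
  rcases hw with (rfl | rfl | rfl | rfl | rfl | rfl | rfl | rfl | rfl | rfl | rfl | rfl | rfl |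
    rfl | rfl | rfl | rfl | rfl) | (rfl | rfl | rfl) <;>
    simp [genImage, cnj, a1, a2, a3, a4, a5, tt, Prod.ext_iff, sq] <;>
    first
      | decide
      | (rw [one_def, r.injEq]; linear_combination h2)
      | (rw [one_def, r.injEq]; ring)

def toModel : K1 n →* Model n := PresentedGroup.toGroup (lift_genImage_eq_one n)

abbrev gen (g : KGen) : K1 n := PresentedGroup.of g

theorem lift_gen_eq_one {w : FreeGroup KGen}
    (hw : w ∈ commonRels n ∪ {a1 ^ 2, a2 ^ 2 * (a3 * tt)⁻¹, cnj a5 a4 * a5⁻¹}) :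
    FreeGroup.lift (gen n) w = 1 := by
  rw [show FreeGroup.lift (gen n) = PresentedGroup.mk _ by ext; rfl]
  exact PresentedGroup.one_of_mem hw

theorem gen_t_eq_inv_sq : gen n .t = (gen n .g3 ^ 2)⁻¹ := by
  have h := lift_gen_eq_one n (w := a3 ^ 2 * tt) (by simp [commonRels])
  simp only [a3, tt, map_mul, map_pow, FreeGroup.lift_apply_of] at h
  exact eq_inv_of_mul_eq_one_right h

theorem gen_g3_eq_zpow : gen n .g3 = gen n .g2 ^ (-2 : ℤ) := by
  have h := lift_gen_eq_one n (w := a2 ^ 2 * (a3 * tt)⁻¹) (by simp)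
  simp only [a2, a3, tt, map_mul, map_inv, map_pow, FreeGroup.lift_apply_of, mul_inv_eq_one,
    gen_t_eq_inv_sq] at h
  rw [show gen n .g2 ^ (-2 : ℤ) = (gen n .g2 ^ 2)⁻¹ by group, h]
  group

theorem gen_t_eq_pow : gen n .t = gen n .g2 ^ 4 := by
  rw [gen_t_eq_inv_sq, gen_g3_eq_zpow]
  group

theorem gen_g2_pow : gen n .g2 ^ 2 ^ (n + 3) = 1 := by
  have h := lift_gen_eq_one n (w := tt ^ 2 ^ (n + 1)) (by simp [commonRels])
  simp only [tt, map_pow, FreeGroup.lift_apply_of, gen_t_eq_pow, ← pow_mul] at h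
  rwa [show 2 ^ (n + 3) = 4 * 2 ^ (n + 1) by ring]

theorem gen_g1_sq : gen n .g1 ^ 2 = 1 := by
  have h := lift_gen_eq_one n (w := a1 ^ 2) (by simp)
  simpa only [a1, map_pow, FreeGroup.lift_apply_of] using h

theorem gen_g1_conj_g2 : (gen n .g1)⁻¹ * gen n .g2 * gen n .g1 = (gen n .g2)⁻¹ := by
  have h := lift_gen_eq_one n (w := cnj a2 a1 * (a2 * a3)⁻¹) (by simp [commonRels])
  simp only [cnj, a1, a2, a3, map_mul, map_inv, FreeGroup.lift_apply_of, mul_inv_eq_one,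
    gen_g3_eq_zpow] at h
  rw [h]
  group

theorem gen_g4_sq : gen n .g4 ^ 2 = 1 := by
  have h := lift_gen_eq_one n (w := a4 ^ 2) (by simp [commonRels])
  simpa only [a4, map_pow, FreeGroup.lift_apply_of] using h

theorem gen_g5_sq : gen n .g5 ^ 2 = 1 := by
  have h := lift_gen_eq_one n (w := a5 ^ 2) (by simp [commonRels])
  simpa only [a5, map_pow, FreeGroup.lift_apply_of] using h

theorem commute_gen (x y : KGen)
    (h : cnj (.of x) (.of y) * (.of x)⁻¹ ∈
      commonRels n ∪ {a1 ^ 2, a2 ^ 2 * (a3 * tt)⁻¹, cnj a5 a4 * a5⁻¹}) :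
    Commute (gen n x) (gen n y) := by
  have h := lift_gen_eq_one n h
  simp only [cnj, map_mul, map_inv, FreeGroup.lift_apply_of, mul_inv_eq_one] at h
  exact commute_of_inv_mul_mul_eq h

theorem gen_g5_conj_g4 : (gen n .g5)⁻¹ * gen n .g4 * gen n .g5 = (gen n .g4)⁻¹ := by
  have hc : Commute (gen n .g4) (gen n .g5) := (commute_gen n .g5 .g4 (by simp [a4, a5])).symm
  rw [mul_assoc, hc.eq, inv_mul_cancel_left, eq_inv_iff_mul_eq_one, ← sq, gen_g4_sq]

def ofDihedral : DihedralGroup (2 ^ (n + 3)) →* K1 n :=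
  lift (gen n .g2) (gen n .g1) (gen_g2_pow n) (gen_g1_sq n) (gen_g1_conj_g2 n)

def ofKlein : DihedralGroup 2 →* K1 n :=
  lift (gen n .g4) (gen n .g5) (gen_g4_sq n) (gen_g5_sq n) (gen_g5_conj_g4 n)

theorem commute_ofDihedral_ofKlein (x : DihedralGroup (2 ^ (n + 3))) (y : DihedralGroup 2) :
    Commute (ofDihedral n x) (ofKlein n y) := by
  have hg2 : Commute (ofKlein n y) (gen n .g2) :=
    lift_commute (commute_gen n .g4 .g2 (by simp [commonRels, a2, a4]))
      (commute_gen n .g5 .g2 (by simp [commonRels, a2, a5])) _ _ _ y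
  have hg1 : Commute (ofKlein n y) (gen n .g1) :=
    lift_commute (commute_gen n .g4 .g1 (by simp [commonRels, a1, a4]))
      (commute_gen n .g5 .g1 (by simp [commonRels, a1, a5])) _ _ _ y
  exact lift_commute hg2.symm hg1.symm _ _ _ x

def ofModel : Model n →* K1 n :=
  (ofDihedral n).noncommCoprod (ofKlein n) (commute_ofDihedral_ofKlein n)

theorem ofModel_genImage (g : KGen) : ofModel n (genImage n g) = gen n g := by
  have hg2 : ofModel n (r 1, 1) = gen n .g2 := by simp [ofModel, ofDihedral]
  cases g
  · simp [ofModel, ofDihedral, genImage]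
  · exact hg2
  · rw [genImage, map_zpow, hg2, gen_g3_eq_zpow]
  · simp [ofModel, ofKlein, genImage]
  · simp [ofModel, ofKlein, genImage]
  · rw [genImage, map_pow, hg2, gen_t_eq_pow]

def equivModel : K1 n ≃* Model n :=
  (toModel n).toMulEquiv (ofModel n)
    (PresentedGroup.ext fun g => by
      rw [MonoidHom.comp_apply, toModel, PresentedGroup.toGroup.of, ofModel_genImage]
      rfl)
    (by
      rw [ofModel, MonoidHom.comp_noncommCoprod]
      convert MonoidHom.noncommCoprod_inl_inr <;> ext <;>
        simp [toModel, ofDihedral, ofKlein, PresentedGroup.toGroup.of, genImage])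

theorem card : Nat.card (K1 n) = 2 ^ (n + 6) := by
  rw [Nat.card_congr (equivModel n).toEquiv, Nat.card_prod, DihedralGroup.nat_card,
    DihedralGroup.nat_card]
  ring

theorem lowerCentralSeries_eq_bot_iff {k : ℕ} (hk : 1 ≤ k) :
    (⊤ : Subgroup (K1 n)).lowerCentralSeries k = ⊥ ↔ n + 3 ≤ k := by
  have hKlein := lowerCentralSeries_two_pow_eq_bot_iff (e := 1) hk
  rw [pow_one] at hKlein
  rw [(equivModel n).lowerCentralSeries_eq_bot_iff, top_lowerCentralSeries_prod, prod_eq_bot_iff,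
    lowerCentralSeries_two_pow_eq_bot_iff hk, hKlein]
  omega

theorem not_isPGroup_mulAut : ¬ IsPGroup 2 (MulAut (K1 n)) := fun h =>
  not_isPGroup_two_mulAut_two (h.of_equiv (MulAut.congr (equivModel n))).of_mulAut_prod

end K1

theorem K1_card_class_autNotPGroup_general (n : ℕ) :
    Nat.card (K1 n) = 2 ^ (n + 6) ∧
      (⊤ : Subgroup (K1 n)).lowerCentralSeries (n + 3) = ⊥ ∧
      (⊤ : Subgroup (K1 n)).lowerCentralSeries (n + 2) ≠ ⊥ ∧
      ¬ IsPGroup 2 (MulAut (K1 n)) :=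
  ⟨K1.card n, (K1.lowerCentralSeries_eq_bot_iff n (by omega)).2 le_rfl,
    fun h => absurd ((K1.lowerCentralSeries_eq_bot_iff n (by omega)).1 h) (by omega),
    K1.not_isPGroup_mulAut n⟩

/-- For every `n ≥ 2`, the group `Kₙ^1` has order `2^(n+6)`, nilpotency class `n + 3`
(hence coclass `3`), and its automorphism group is not a `2`-group. -/
theorem K1_card_class_autNotPGroup (n : ℕ) (hn : 2 ≤ n) :
    Nat.card (K1 n) = 2 ^ (n + 6) ∧
      (⊤ : Subgroup (K1 n)).lowerCentralSeries (n + 3) = ⊥ ∧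
      (⊤ : Subgroup (K1 n)).lowerCentralSeries (n + 2) ≠ ⊥ ∧
      ¬ IsPGroup 2 (MulAut (K1 n)) :=
  K1_card_class_autNotPGroup_general n
end

section
/- For every natural number k ≥ 2, the automorphism group of the dihedral group of order 2^{k+1} (DihedralGroup (2^k) in Mathlib, which has order 2·2^k) is a 2-group. -/
/-!
An automorphism `φ` of `DihedralGroup n`, `n ≠ 2`, sends `r 1` to a rotation `r u` (the reflections
have order `2`), and `u` is a unit since `φ⁻¹` does the same. Then `φ ^ m` sends `r 1` to `r (u ^ m)`,
so as `(ZMod (2 ^ k))ˣ` is a `2`-group some `φ ^ 2 ^ m` fixes `r 1`, hence every rotation. Such an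
automorphism `ψ` acts on reflections by the translation `sr j ↦ sr (b + j)`, so `ψ ^ n = 1`.
-/

open DihedralGroup

theorem ZMod.isPGroup_units_two_pow (k : ℕ) : IsPGroup 2 (ZMod (2 ^ k))ˣ := by
  refine IsPGroup.of_card (n := k - 1) ?_
  rw [Nat.card_eq_fintype_card, ZMod.card_units_eq_totient]
  rcases k with _ | k
  · simp
  · simp [Nat.totient_prime_pow_succ Nat.prime_two]

namespace DihedralGroup

variable {n : ℕ}

theorem r_one_pow_val [NeZero n] (j : ZMod n) : (r 1 : DihedralGroup n) ^ j.val = r j := by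
  rw [r_one_pow, ZMod.natCast_zmod_val]

theorem monoidHom_ext [NeZero n] {M : Type*} [Monoid M] {f g : DihedralGroup n →* M}
    (hr : f (r 1) = g (r 1)) (hs : f (sr 0) = g (sr 0)) : f = g := by
  have hrj (j : ZMod n) : f (r j) = g (r j) := by
    rw [← r_one_pow_val, map_pow, map_pow, hr]
  ext (j | j)
  · exact hrj j
  · rw [← zero_add j, ← sr_mul_r, map_mul, map_mul, hs, hrj]

theorem mulAut_ext [NeZero n] {φ ψ : MulAut (DihedralGroup n)}
    (hr : φ (r 1) = ψ (r 1)) (hs : φ (sr 0) = ψ (sr 0)) : φ = ψ :=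
  MulEquiv.toMonoidHom_injective (monoidHom_ext hr hs)

theorem map_r_of_map_r_one [NeZero n] {F : Type*} [FunLike F (DihedralGroup n) (DihedralGroup n)]
    [MonoidHomClass F (DihedralGroup n) (DihedralGroup n)] (f : F) {u : ZMod n}
    (hu : f (r 1) = r u) (j : ZMod n) : f (r j) = r (u * j) := by
  rw [← r_one_pow_val, map_pow, hu, r_pow, ZMod.natCast_zmod_val]

theorem exists_mulAut_apply_r_one_eq_r (hn : n ≠ 2) (φ : MulAut (DihedralGroup n)) :
    ∃ u, φ (r 1) = r u := by
  cases h : φ (r 1) with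
  | r u => exact ⟨u, rfl⟩
  | sr i =>
    have := φ.orderOf_eq (r 1)
    rw [h, orderOf_sr, orderOf_r_one] at this
    exact absurd this.symm hn

theorem exists_unit_mulAut_apply_r_one_eq_r [NeZero n] (hn : n ≠ 2)
    (φ : MulAut (DihedralGroup n)) :
    ∃ u : (ZMod n)ˣ, φ (r 1) = r u := by
  obtain ⟨u, hu⟩ := exists_mulAut_apply_r_one_eq_r hn φ
  obtain ⟨v, hv⟩ := exists_mulAut_apply_r_one_eq_r hn φ⁻¹
  have : r 1 = r (u * v) := by
    rw [← map_r_of_map_r_one φ hu, ← hv, MulAut.inv_apply, MulEquiv.apply_symm_apply]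
  exact ⟨(IsUnit.of_mul_eq_one v (r.inj this).symm).unit, hu⟩

theorem mulAut_pow_apply_r_one [NeZero n] {φ : MulAut (DihedralGroup n)} {u : ZMod n}
    (hu : φ (r 1) = r u) (m : ℕ) : (φ ^ m) (r 1) = r (u ^ m) := by
  induction m with
  | zero => simp
  | succ m ih => rw [pow_succ', MulAut.mul_apply, ih, map_r_of_map_r_one φ hu, pow_succ']

theorem mulAut_pow_eq_one_of_apply_r_one [NeZero n] {ψ : MulAut (DihedralGroup n)}
    (hψ : ψ (r 1) = r 1) : ψ ^ n = 1 := by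
  have hrot (j : ZMod n) : ψ (r j) = r j := by
    rw [map_r_of_map_r_one ψ hψ, one_mul]
  obtain ⟨b, hb⟩ : ∃ b, ψ (sr 0) = sr b := by
    cases h : ψ (sr 0) with
    | r c => exact absurd (ψ.injective (h.trans (hrot c).symm)) (by simp)
    | sr b => exact ⟨b, rfl⟩
  have hpow (m : ℕ) : (ψ ^ m) (sr 0) = sr ((m : ZMod n) * b) := by
    induction m with
    | zero => simp
    | succ m ih =>
      rw [pow_succ', MulAut.mul_apply, ih, ← zero_add ((m : ZMod n) * b), ← sr_mul_r, map_mul, hb,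
        hrot, sr_mul_r]
      congr 1
      push_cast
      ring
  exact mulAut_ext (by simp [mulAut_pow_apply_r_one hψ]) (by simp [hpow])

end DihedralGroup

/-- For every `k ≥ 2`, the automorphism group of the dihedral group of order `2 ^ (k + 1)`
is a `2`-group. -/
theorem aut_dihedralGroup_isPGroup (k : ℕ) (hk : 2 ≤ k) :
    IsPGroup 2 (MulAut (DihedralGroup (2 ^ k))) := by
  have h2k : 2 ^ k ≠ 2 := (Nat.pow_lt_pow_right one_lt_two hk).ne'
  intro φ
  obtain ⟨u, hu⟩ := exists_unit_mulAut_apply_r_one_eq_r h2k φ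
  obtain ⟨m, hm⟩ := ZMod.isPGroup_units_two_pow k u
  have hfix : (φ ^ 2 ^ m) (r 1) = r 1 := by
    rw [mulAut_pow_apply_r_one hu, ← Units.val_pow_eq_pow_val, hm, Units.val_one]
  exact ⟨m + k, by rw [pow_add, pow_mul, mulAut_pow_eq_one_of_apply_r_one hfix]⟩
end

section
/- For every natural number k ≥ 2, the automorphism group of the generalized quaternion group of order 2^{k+2} (QuaternionGroup (2^k) in Mathlib, which has order 4·2^k) is a 2-group. -/
/-!
Since `n = 2 ^ k > 2`, the elements `xa _` have order `4 < 2 * n`, so an automorphism `σ` sends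
the generator `a 1` to another generator `a u` of the cyclic subgroup `⟨a 1⟩`, with `u` a unit of
`ZMod (2 * n)`. The unit group of `ZMod (2 ^ (k + 1))` has order `2 ^ k`, so `σ ^ 2 ^ k` fixes
`⟨a 1⟩` pointwise. Such an automorphism acts on the coset of the `xa _` as a translation
`xa y ↦ xa (s + y)`, hence has order dividing `2 * n`.
-/

theorem ZMod.units_pow_two_pow_eq_one (k : ℕ) (u : (ZMod (2 * 2 ^ k))ˣ) : u ^ 2 ^ k = 1 := by
  have htot : Nat.totient (2 * 2 ^ k) = 2 ^ k := by
    rw [← pow_succ', Nat.totient_prime_pow_succ Nat.prime_two, Nat.add_one_sub_one, mul_one]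
  simpa only [htot] using ZMod.pow_totient u

namespace QuaternionGroup

variable {n : ℕ}

theorem map_a_of_map_a_one [NeZero n] (f : QuaternionGroup n →* QuaternionGroup n)
    {i : ZMod (2 * n)} (h : f (a 1) = a i) (x : ZMod (2 * n)) : f (a x) = a (i * x) := by
  rw [← ZMod.natCast_zmod_val x, ← a_one_pow, map_pow, h, ← ZMod.natCast_zmod_val i, ← a_one_pow,
    ← pow_mul, a_one_pow]
  congr 1
  push_cast
  ring

theorem exists_units_mulAut_apply_a (hn : 2 < n) (φ : MulAut (QuaternionGroup n)) :
    ∃ u : (ZMod (2 * n))ˣ, ∀ x, φ (a x) = a (u * x : ZMod (2 * n)) := by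
  have : NeZero n := ⟨by omega⟩
  have hord : orderOf (φ (a 1)) = 2 * n := by rw [MulEquiv.orderOf_eq, orderOf_a_one]
  cases hφ : φ (a 1) with
  | xa i =>
    rw [hφ, orderOf_xa] at hord
    omega
  | a i =>
    rw [hφ, orderOf_a] at hord
    have hcop : Nat.Coprime i.val (2 * n) :=
      Nat.Coprime.symm ((Nat.div_eq_self.mp hord).resolve_left (by omega))
    have hunit : IsUnit i := by
      rw [← ZMod.natCast_zmod_val i]
      exact (ZMod.isUnit_iff_coprime _ _).mpr hcop
    exact ⟨hunit.unit, map_a_of_map_a_one φ.toMonoidHom hφ⟩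

theorem mulAut_pow_apply_a {φ : MulAut (QuaternionGroup n)} {i : ZMod (2 * n)}
    (h : ∀ x, φ (a x) = a (i * x)) (m : ℕ) (x : ZMod (2 * n)) :
    (φ ^ m) (a x) = a (i ^ m * x) := by
  induction m with
  | zero => simp
  | succ m ih => rw [pow_succ', MulAut.mul_apply, ih, h, pow_succ', mul_assoc]

theorem exists_mulAut_apply_xa_of_forall_apply_a {φ : MulAut (QuaternionGroup n)}
    (h : ∀ x, φ (a x) = a x) : ∃ s, ∀ y, φ (xa y) = xa (s + y) := by
  cases hφ : φ (xa 0) with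
  | a m => exact absurd (φ.injective (hφ.trans (h m).symm)) (by simp)
  | xa s =>
    refine ⟨s, fun y => ?_⟩
    rw [← zero_add y, ← xa_mul_a, map_mul, hφ, h, xa_mul_a, zero_add]

theorem mulAut_pow_two_mul_eq_one_of_forall_apply_a {φ : MulAut (QuaternionGroup n)}
    (h : ∀ x, φ (a x) = a x) : φ ^ (2 * n) = 1 := by
  obtain ⟨s, hs⟩ := exists_mulAut_apply_xa_of_forall_apply_a h
  have hpow : ∀ (m : ℕ) y, (φ ^ m) (xa y) = xa ((m : ZMod (2 * n)) * s + y) := by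
    intro m
    induction m with
    | zero => simp
    | succ m ih => intro y; rw [pow_succ', MulAut.mul_apply, ih, hs]; congr 1; push_cast; ring
  ext g
  cases g with
  | a x => simpa using mulAut_pow_apply_a (i := 1) (by simpa using h) (2 * n) x
  | xa y => simpa using hpow (2 * n) y

end QuaternionGroup

open QuaternionGroup in
/-- For every `k ≥ 2`, the automorphism group of the generalized quaternion group of order
`2 ^ (k + 2)` is a `2`-group. -/
theorem aut_quaternionGroup_isPGroup (k : ℕ) (hk : 2 ≤ k) :
    IsPGroup 2 (MulAut (QuaternionGroup (2 ^ k))) := by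
  intro σ
  have hn : 2 < 2 ^ k := lt_of_lt_of_le (by norm_num) (Nat.pow_le_pow_right two_pos hk)
  obtain ⟨u, hu⟩ := exists_units_mulAut_apply_a hn σ
  have hfix : ∀ x, (σ ^ 2 ^ k) (a x) = a x := fun x => by
    rw [mulAut_pow_apply_a hu, ← Units.val_pow_eq_pow_val, ZMod.units_pow_two_pow_eq_one,
      Units.val_one, one_mul]
  refine ⟨2 * k + 1, ?_⟩
  rw [show 2 ^ (2 * k + 1) = 2 ^ k * (2 * 2 ^ k) by ring, pow_mul,
    mulAut_pow_two_mul_eq_one_of_forall_apply_a hfix]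
end
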